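/- arXiv:0909.4364 — 3 statements merged into one kernel-verified Lean document; each statement's English description precedes it below -/
import Mathlib

section
/- If f is a modular form of weight 2k and g is a modular form of weight 2l for a subgroup Γ of SL_2(ℝ), then [f,g]_n satisfies the modularity condition of weight 2k+2l+2n for Γ: ([f,g]_n)|_{2k+2l+2n} γ = [f,g]_n for all γ ∈ Γ. -/
/-!
With $J = cz + d$, the Cohen–Kuznetsov series
$\tilde f(z, X) = \sum_n f^{(n)}(z) X^n / (n! (w)_n)$ of a form of weight $w$ transforms as
$\tilde f(\gamma z, X / J^2) = J^w e^{cX/J} \tilde f(z, X)$; coefficientwise this is a formula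
for $f^{(n)}(\gamma z)$ proved by induction on $n$, differentiating the previous one.
Up to a constant, $[f, g]_n$ is the coefficient of $X^n$ in $\tilde f(z, -X) \tilde g(z, X)$,
and in that product the factors $e^{-cX/J}$ and $e^{cX/J}$ cancel.
-/

open Finset PowerSeries UpperHalfPlane
open scoped MatrixGroups Nat

section Moebius

variable (γ : SL(2, ℝ)) {z : ℂ}

lemma im_num_div_denom_pos (hz : 0 < z.im) : 0 < (num γ z / denom γ z).im := by
  rw [moebius_im]
  simpa using div_pos hz (normSq_denom_pos γ hz.ne')

lemma hasDerivAt_num_div_denom (hz : z.im ≠ 0) :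
    HasDerivAt (fun w ↦ num γ w / denom γ w) (denom γ z ^ 2)⁻¹ z := by
  have hlin (a b : ℝ) : HasDerivAt (fun w : ℂ ↦ a * w + b) (a : ℂ) z := by
    simpa using ((hasDerivAt_id z).const_mul (a : ℂ)).add_const (b : ℂ)
  refine ((hlin (γ 0 0) (γ 0 1)).div (hlin (γ 1 0) (γ 1 1))
    (denom_ne_zero_of_im γ hz)).congr_deriv ?_
  have hdet : ((γ 0 0 * γ 1 1 - γ 0 1 * γ 1 0 : ℝ) : ℂ) = 1 := by
    rw [← Matrix.det_fin_two, γ.det_coe, Complex.ofReal_one]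
  have hJ := denom_ne_zero_of_im γ hz
  simp only [denom, Matrix.SpecialLinearGroup.coe_GL_coe_matrix] at hJ ⊢
  push_cast at hdet
  field_simp
  linear_combination hdet

end Moebius

theorem rescale_neg_one_mul_eq_of_twist {A : Type*} [CommRing A] [Algebra ℚ A] {s t u v : A}
    {P P' Q Q' : A⟦X⟧} (hP : rescale s P' = C u * P * rescale t (exp A))
    (hQ : rescale s Q' = C v * Q * rescale t (exp A)) :
    rescale s (rescale (-1) P' * Q') = C (u * v) * (rescale (-1) P * Q) := by
  have hC : rescale (-1) (C u) = C u := by ext n; simp +contextual [coeff_C]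
  have hexp : rescale (-t) (exp A) * rescale t (exp A) = 1 := by
    rw [exp_mul_exp_eq_exp_add, neg_add_cancel, rescale_zero_apply, constantCoeff_exp, map_one]
  rw [map_mul, rescale_rescale, mul_comm (-1) s, ← rescale_rescale, hP, hQ, map_mul, map_mul,
    rescale_rescale, mul_neg_one, hC, map_mul]
  linear_combination (C u * C v * rescale (-1) P * Q) * hexp

lemma natCast_ascFactorial_ne_zero {R : Type*} [AddMonoidWithOne R] [CharZero R] {w : ℕ}
    (hw : 0 < w) (n : ℕ) : (w.ascFactorial n : R) ≠ 0 := by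
  obtain ⟨w, rfl⟩ := Nat.exists_eq_add_one_of_ne_zero hw.ne'
  exact Nat.cast_ne_zero.mpr (Nat.ascFactorial_pos w n).ne'

lemma choose_mul_factorial_mul_ascFactorial {w n r : ℕ} (hw : 0 < w) (hr : r ≤ n) :
    (n + w - 1).choose (n - r) * (n - r)! * w.ascFactorial r = w.ascFactorial n := by
  obtain ⟨v, rfl⟩ := Nat.exists_eq_add_one_of_ne_zero hw.ne'
  apply Nat.eq_of_mul_eq_mul_left (Nat.factorial_pos v)
  have h := Nat.choose_mul_factorial_mul_factorial (show n - r ≤ n + v by omega)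
  rw [show n + v - (n - r) = v + r by omega] at h
  rw [mul_left_comm, Nat.factorial_mul_ascFactorial, Nat.factorial_mul_ascFactorial,
    show n + (v + 1) - 1 = n + v by omega, h, add_comm]

lemma sq_mul_deriv_sum_range_eq {w : ℕ} (hw : 0 < w) (n : ℕ) (c J : ℂ) (a : ℕ → ℂ) :
    J ^ 2 * ∑ i ∈ range (n + 1),
      (c ^ (n - i) / (n - i)! * ((w + n + i : ℕ) * J ^ (w + n + i - 1) * c) * a i +
        c ^ (n - i) / (n - i)! * J ^ (w + n + i) * ((i + 1) * (w + i) * a (i + 1))) =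
    (n + 1) * (w + n) * ∑ i ∈ range (n + 2),
      c ^ (n + 1 - i) / (n + 1 - i)! * J ^ (w + (n + 1) + i) * a i := by
  set T : ℕ → ℂ := fun i ↦ c ^ (n + 1 - i) / (n + 1 - i)! * J ^ (w + (n + 1) + i) * a i
  have hmul (i : ℕ) (hi : i ∈ range (n + 1)) : J ^ 2 *
      (c ^ (n - i) / (n - i)! * ((w + n + i : ℕ) * J ^ (w + n + i - 1) * c) * a i +
        c ^ (n - i) / (n - i)! * J ^ (w + n + i) * ((i + 1) * (w + i) * a (i + 1))) =
      (n + 1 - i) * (w + n + i) * T i + (i + 1) * (w + i) * T (i + 1) := by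
    obtain ⟨m, rfl⟩ : ∃ m, n = i + m := ⟨n - i, by simp at hi; omega⟩
    obtain ⟨v, rfl⟩ : ∃ v, w = v + 1 := ⟨w - 1, by omega⟩
    simp only [T, show i + m + 1 - i = m + 1 by omega, show i + m + 1 - (i + 1) = m by omega,
      show i + m - i = m by omega, show v + 1 + (i + m) + i - 1 = v + i + m + i by omega,
      Nat.factorial_succ]
    push_cast
    field_simp
    ring
  have hlast : ∑ i ∈ range (n + 1), (n + 1 - i : ℂ) * (w + n + i) * T i =
      ∑ i ∈ range (n + 2), (n + 1 - i : ℂ) * (w + n + i) * T i := by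
    simp [sum_range_succ _ (n + 1)]
  have hshift : ∑ i ∈ range (n + 1), (i + 1 : ℂ) * (w + i) * T (i + 1) =
      ∑ i ∈ range (n + 2), (i : ℂ) * (w + i - 1) * T i := by
    simp only [sum_range_succ' _ (n + 1), Nat.cast_add, Nat.cast_one, Nat.cast_zero, zero_mul,
      add_zero]
    exact sum_congr rfl fun i _ ↦ by ring
  rw [mul_sum, sum_congr rfl hmul, sum_add_distrib, hlast, hshift, ← sum_add_distrib, mul_sum]
  -- `(n + 1 - i) (w + n + i) + i (w + i - 1) = (n + 1) (w + n)`
  exact sum_congr rfl fun i _ ↦ by ring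

noncomputable def cohenKuznetsov (w : ℕ) (f : ℂ → ℂ) (z : ℂ) : ℂ⟦X⟧ :=
  mk fun n ↦ iteratedDeriv n f z / (n ! * w.ascFactorial n)

lemma hasDerivAt_coeff_cohenKuznetsov {w : ℕ} (hw : 0 < w) {f : ℂ → ℂ} {U : Set ℂ}
    (hU : IsOpen U) (hf : DifferentiableOn ℂ f U) (n : ℕ) {z : ℂ} (hz : z ∈ U) :
    HasDerivAt (fun z ↦ coeff n (cohenKuznetsov w f z))
      ((n + 1) * (w + n) * coeff (n + 1) (cohenKuznetsov w f z)) z := by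
  have hderiv : HasDerivAt (iteratedDeriv n f) (iteratedDeriv (n + 1) f z) z := by
    rw [iteratedDeriv_succ, iteratedDeriv_eq_iterate]
    exact ((hf.analyticOnNhd hU).iterated_deriv n z hz).differentiableAt.hasDerivAt
  simp only [cohenKuznetsov, coeff_mk]
  refine (hderiv.div_const _).congr_deriv ?_
  have := natCast_ascFactorial_ne_zero (R := ℂ) hw n
  have : (w + n : ℂ) ≠ 0 := by norm_cast; omega
  rw [Nat.factorial_succ, Nat.ascFactorial_succ]
  push_cast
  field_simp

lemma hasDerivAt_sum_cohenKuznetsov {w : ℕ} (hw : 0 < w) {f : ℂ → ℂ} {U : Set ℂ}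
    (hU : IsOpen U) (hf : DifferentiableOn ℂ f U) (c d : ℂ) (n : ℕ) {z : ℂ} (hz : z ∈ U)
    (hJ : c * z + d ≠ 0) :
    HasDerivAt (fun z ↦ ∑ i ∈ range (n + 1),
        c ^ (n - i) / (n - i)! * (c * z + d) ^ (w + n + i) * coeff i (cohenKuznetsov w f z))
      ((n + 1) * (w + n) * (∑ i ∈ range (n + 2), c ^ (n + 1 - i) / (n + 1 - i)! *
        (c * z + d) ^ (w + (n + 1) + i) * coeff i (cohenKuznetsov w f z)) / (c * z + d) ^ 2) z := by
  have hlin : HasDerivAt (fun z ↦ c * z + d) c z := by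
    simpa using ((hasDerivAt_id z).const_mul c).add_const d
  refine (HasDerivAt.fun_sum fun i _ ↦ ((hlin.pow _).const_mul _).mul
    (hasDerivAt_coeff_cohenKuznetsov hw hU hf i hz)).congr_deriv ?_
  rw [eq_div_iff (pow_ne_zero 2 hJ), mul_comm]
  exact sq_mul_deriv_sum_range_eq hw n c _ _

theorem coeff_cohenKuznetsov_num_div_denom (γ : SL(2, ℝ)) {w : ℕ} (hw : 0 < w) {f : ℂ → ℂ}
    (hf : DifferentiableOn ℂ f {z | 0 < z.im})
    (hmod : ∀ z : ℂ, 0 < z.im → f (num γ z / denom γ z) = denom γ z ^ w * f z) (n : ℕ) {z : ℂ}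
    (hz : 0 < z.im) :
    coeff n (cohenKuznetsov w f (num γ z / denom γ z)) = ∑ i ∈ range (n + 1),
      (γ 1 0 : ℂ) ^ (n - i) / (n - i)! * denom γ z ^ (w + n + i) *
        coeff i (cohenKuznetsov w f z) := by
  induction n generalizing z with
  | zero => simp [cohenKuznetsov, hmod z hz]
  | succ n ih =>
    have hJ := denom_ne_zero_of_im γ hz.ne'
    have hlhs := (hasDerivAt_coeff_cohenKuznetsov hw isOpen_upperHalfPlaneSet hf n
      (im_num_div_denom_pos γ hz)).comp z (hasDerivAt_num_div_denom γ hz.ne')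
    have hrhs :=
      hasDerivAt_sum_cohenKuznetsov hw isOpen_upperHalfPlaneSet hf (γ 1 0) (γ 1 1) n hz hJ
    have heq : (fun z ↦ coeff n (cohenKuznetsov w f (num γ z / denom γ z))) =ᶠ[nhds z] _ :=
      Filter.eventually_of_mem (isOpen_upperHalfPlaneSet.mem_nhds hz) fun z hz ↦ ih hz
    have hderiv := (hlhs.congr_of_eventuallyEq heq.symm).unique hrhs
    have hc : ((n : ℂ) + 1) * (w + n) ≠ 0 := by norm_cast; positivity
    rw [div_eq_mul_inv] at hderiv
    exact mul_left_cancel₀ hc (mul_right_cancel₀ (inv_ne_zero (pow_ne_zero 2 hJ)) hderiv)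

theorem rescale_cohenKuznetsov_num_div_denom (γ : SL(2, ℝ)) {w : ℕ} (hw : 0 < w) {f : ℂ → ℂ}
    (hf : DifferentiableOn ℂ f {z | 0 < z.im})
    (hmod : ∀ z : ℂ, 0 < z.im → f (num γ z / denom γ z) = denom γ z ^ w * f z) {z : ℂ}
    (hz : 0 < z.im) :
    rescale (denom γ z ^ 2)⁻¹ (cohenKuznetsov w f (num γ z / denom γ z)) =
      C (denom γ z ^ w) * cohenKuznetsov w f z * rescale ((γ 1 0 : ℂ) / denom γ z) (exp ℂ) := by
  have hJ := denom_ne_zero_of_im γ hz.ne'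
  ext n
  rw [coeff_rescale, coeff_cohenKuznetsov_num_div_denom γ hw hf hmod n hz, coeff_mul,
    Nat.sum_antidiagonal_eq_sum_range_succ_mk, mul_sum]
  refine sum_congr rfl fun i hi ↦ ?_
  obtain ⟨m, rfl⟩ : ∃ m, n = i + m := ⟨n - i, by simp at hi; omega⟩
  simp only [coeff_rescale, coeff_exp, coeff_C_mul, Nat.add_sub_cancel_left, map_div₀, map_one,
    map_natCast, inv_pow, div_pow, ← pow_mul]
  field_simp
  ring

noncomputable def rankinCohen (w w' n : ℕ) (f g : ℂ → ℂ) (z : ℂ) : ℂ :=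
  ∑ r ∈ range (n + 1), (-1 : ℂ) ^ r * ((n + w - 1).choose (n - r)) * ((n + w' - 1).choose r) *
    ((1 / (2 * Real.pi * Complex.I)) ^ r * iteratedDeriv r f z) *
    ((1 / (2 * Real.pi * Complex.I)) ^ (n - r) * iteratedDeriv (n - r) g z)

lemma rankinCohen_eq_coeff {w w' : ℕ} (hw : 0 < w) (hw' : 0 < w') (n : ℕ) (f g : ℂ → ℂ)
    (z : ℂ) :
    rankinCohen w w' n f g z = (1 / (2 * Real.pi * Complex.I)) ^ n * w.ascFactorial n *
      w'.ascFactorial n *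
        coeff n (rescale (-1) (cohenKuznetsov w f z) * cohenKuznetsov w' g z) := by
  rw [rankinCohen, coeff_mul, Nat.sum_antidiagonal_eq_sum_range_succ_mk, mul_sum]
  refine sum_congr rfl fun r hr ↦ ?_
  obtain ⟨m, rfl⟩ : ∃ m, n = r + m := ⟨n - r, by simp at hr; omega⟩
  have hf := choose_mul_factorial_mul_ascFactorial (w := w) hw (Nat.le_add_right r m)
  have hg := choose_mul_factorial_mul_ascFactorial (w := w') hw' (Nat.le_add_left m r)
  simp only [Nat.add_sub_cancel_left, Nat.add_sub_cancel] at hf hg ⊢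
  simp only [cohenKuznetsov, coeff_rescale, coeff_mk, ← hf, ← hg]
  have := natCast_ascFactorial_ne_zero (R := ℂ) hw r
  have := natCast_ascFactorial_ne_zero (R := ℂ) hw' m
  have : (r ! : ℂ) ≠ 0 := by exact_mod_cast r.factorial_ne_zero
  have : (m ! : ℂ) ≠ 0 := by exact_mod_cast m.factorial_ne_zero
  push_cast
  field_simp
  ring

theorem rankinCohen_num_div_denom (γ : SL(2, ℝ)) {w w' : ℕ} (hw : 0 < w) (hw' : 0 < w')
    {f g : ℂ → ℂ} (hf : DifferentiableOn ℂ f {z | 0 < z.im})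
    (hg : DifferentiableOn ℂ g {z | 0 < z.im})
    (hfmod : ∀ z : ℂ, 0 < z.im → f (num γ z / denom γ z) = denom γ z ^ w * f z)
    (hgmod : ∀ z : ℂ, 0 < z.im → g (num γ z / denom γ z) = denom γ z ^ w' * g z) (n : ℕ) {z : ℂ}
    (hz : 0 < z.im) :
    rankinCohen w w' n f g (num γ z / denom γ z) =
      denom γ z ^ (w + w' + 2 * n) * rankinCohen w w' n f g z := by
  have hJ := denom_ne_zero_of_im γ hz.ne'
  have key := congrArg (coeff n) (rescale_neg_one_mul_eq_of_twist
    (rescale_cohenKuznetsov_num_div_denom γ hw hf hfmod hz)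
    (rescale_cohenKuznetsov_num_div_denom γ hw' hg hgmod hz))
  rw [coeff_rescale, coeff_C_mul, inv_pow,
    inv_mul_eq_iff_eq_mul₀ (pow_ne_zero n (pow_ne_zero 2 hJ))] at key
  rw [rankinCohen_eq_coeff hw hw', rankinCohen_eq_coeff hw hw', key]
  ring

open Finset in
/-- If `f`, `g` are modular of weights `2k`, `2l` for `Γ ≤ SL₂(ℝ)`, then the n-th
Rankin-Cohen bracket `[f,g]_n` satisfies the modularity condition of weight `2k+2l+2n`. -/
theorem rankinCohen_modularity (k l n : ℕ) (hk : 1 ≤ k) (hl : 1 ≤ l)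
    (Γ : Subgroup (Matrix.SpecialLinearGroup (Fin 2) ℝ))
    (f g : ℂ → ℂ)
    (hf : DifferentiableOn ℂ f {z : ℂ | 0 < z.im})
    (hg : DifferentiableOn ℂ g {z : ℂ | 0 < z.im})
    (hfmod : ∀ γ ∈ Γ, ∀ z : ℂ, 0 < z.im →
      ((γ.1 1 0 : ℂ) * z + (γ.1 1 1 : ℂ)) ^ (-(2 * k : ℤ)) *
        f (((γ.1 0 0 : ℂ) * z + (γ.1 0 1 : ℂ)) / ((γ.1 1 0 : ℂ) * z + (γ.1 1 1 : ℂ))) = f z)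
    (hgmod : ∀ γ ∈ Γ, ∀ z : ℂ, 0 < z.im →
      ((γ.1 1 0 : ℂ) * z + (γ.1 1 1 : ℂ)) ^ (-(2 * l : ℤ)) *
        g (((γ.1 0 0 : ℂ) * z + (γ.1 0 1 : ℂ)) / ((γ.1 1 0 : ℂ) * z + (γ.1 1 1 : ℂ))) = g z) :
    ∀ γ ∈ Γ, ∀ z : ℂ, 0 < z.im →
      ((γ.1 1 0 : ℂ) * z + (γ.1 1 1 : ℂ)) ^ (-(2 * k + 2 * l + 2 * n : ℤ)) *
        (∑ r ∈ range (n + 1), (-1 : ℂ) ^ r *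
          ((n + 2 * k - 1).choose (n - r)) * ((n + 2 * l - 1).choose r) *
          ((1 / (2 * Real.pi * Complex.I)) ^ r * iteratedDeriv r f
              (((γ.1 0 0 : ℂ) * z + (γ.1 0 1 : ℂ)) / ((γ.1 1 0 : ℂ) * z + (γ.1 1 1 : ℂ)))) *
          ((1 / (2 * Real.pi * Complex.I)) ^ (n - r) * iteratedDeriv (n - r) g
              (((γ.1 0 0 : ℂ) * z + (γ.1 0 1 : ℂ)) / ((γ.1 1 0 : ℂ) * z + (γ.1 1 1 : ℂ))))) =
      ∑ r ∈ range (n + 1), (-1 : ℂ) ^ r *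
        ((n + 2 * k - 1).choose (n - r)) * ((n + 2 * l - 1).choose r) *
        ((1 / (2 * Real.pi * Complex.I)) ^ r * iteratedDeriv r f z) *
        ((1 / (2 * Real.pi * Complex.I)) ^ (n - r) * iteratedDeriv (n - r) g z) := by
  intro γ hγ z hz
  have hmod {h : ℂ → ℂ} {m : ℕ}
      (hh : ∀ z : ℂ, 0 < z.im → denom γ z ^ (-(m : ℤ)) * h (num γ z / denom γ z) = h z)
      (z : ℂ) (hz : 0 < z.im) : h (num γ z / denom γ z) = denom γ z ^ m * h z := by
    rw [← hh z hz, ← mul_assoc, ← zpow_natCast, ← zpow_add₀ (denom_ne_zero_of_im γ hz.ne'),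
      add_neg_cancel, zpow_zero, one_mul]
  have key := rankinCohen_num_div_denom γ (w := 2 * k) (w' := 2 * l) (by omega) (by omega) hf hg
    (hmod fun z hz ↦ by exact_mod_cast hfmod γ hγ z hz)
    (hmod fun z hz ↦ by exact_mod_cast hgmod γ hγ z hz) n hz
  change denom γ z ^ _ * rankinCohen (2 * k) (2 * l) n f g (num γ z / denom γ z) =
    rankinCohen (2 * k) (2 * l) n f g z
  rw [key, ← mul_assoc, ← zpow_natCast, ← zpow_add₀ (denom_ne_zero_of_im γ hz.ne')]
  push_cast
  rw [neg_add_cancel, zpow_zero, one_mul]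
end

section
/- The coproduct Δ on the universal enveloping algebra of the Lie algebra h_1 = span{X,Y} with [Y,X] = X, defined as the algebra homomorphism with Δ(Y) = Y⊗1 + 1⊗Y and Δ(X) = X⊗1 + 1⊗X + δ_1⊗Y together with Δ(δ_1) = δ_1⊗1 + 1⊗δ_1, is coassociative on the generators X, Y, δ_1: (Δ⊗id)∘Δ = (id⊗Δ)∘Δ applied to X, Y, and δ_1. -/
open scoped TensorProduct

namespace AlgHom

variable {R A : Type*} [CommSemiring R] [Semiring A] [Algebra R A]

def IsPrimitive (Δ : A →ₐ[R] A ⊗[R] A) (x : A) : Prop :=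
  Δ x = x ⊗ₜ 1 + 1 ⊗ₜ x

def IsCoassocAt (Δ : A →ₐ[R] A ⊗[R] A) (x : A) : Prop :=
  Algebra.TensorProduct.assoc R R R A A A (Algebra.TensorProduct.map Δ (AlgHom.id R A) (Δ x)) =
    Algebra.TensorProduct.map (AlgHom.id R A) Δ (Δ x)

variable {Δ : A →ₐ[R] A ⊗[R] A}

theorem IsPrimitive.isCoassocAt {x : A} (hx : Δ.IsPrimitive x) : Δ.IsCoassocAt x := by
  rw [IsPrimitive] at hx
  simp only [IsCoassocAt, hx, map_add, map_one, AlgHom.id_apply, Algebra.TensorProduct.map_tmul,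
    TensorProduct.add_tmul, TensorProduct.tmul_add, Algebra.TensorProduct.assoc_tmul,
    Algebra.TensorProduct.one_def]
  abel

-- Both sides expand to `x⊗1⊗1 + 1⊗x⊗1 + 1⊗1⊗x + a⊗b⊗1 + a⊗1⊗b + 1⊗a⊗b`.
theorem isCoassocAt_of_eq_primitive_add_tmul {x a b : A} (ha : Δ.IsPrimitive a)
    (hb : Δ.IsPrimitive b) (hx : Δ x = x ⊗ₜ 1 + 1 ⊗ₜ x + a ⊗ₜ b) : Δ.IsCoassocAt x := by
  rw [IsPrimitive] at ha hb
  simp only [IsCoassocAt, hx, ha, hb, map_add, map_one, AlgHom.id_apply,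
    Algebra.TensorProduct.map_tmul, TensorProduct.add_tmul, TensorProduct.tmul_add,
    Algebra.TensorProduct.assoc_tmul, Algebra.TensorProduct.one_def]
  abel

end AlgHom

theorem H1_coassoc_on_generators_general
    (H : Type*) [Ring H] [Algebra ℂ H]
    (X Y : H) (δ : ℕ+ → H)
    (Δ : H →ₐ[ℂ] H ⊗[ℂ] H)
    (hΔY : Δ Y = Y ⊗ₜ 1 + 1 ⊗ₜ Y)
    (hΔδ1 : Δ (δ 1) = δ 1 ⊗ₜ 1 + 1 ⊗ₜ δ 1)
    (hΔX : Δ X = X ⊗ₜ 1 + 1 ⊗ₜ X + δ 1 ⊗ₜ Y) :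
    ∀ a ∈ ({X, Y, δ 1} : Set H),
      (Algebra.TensorProduct.assoc ℂ ℂ ℂ H H H)
          ((Algebra.TensorProduct.map Δ (AlgHom.id ℂ H)) (Δ a)) =
        (Algebra.TensorProduct.map (AlgHom.id ℂ H) Δ) (Δ a) := by
  have hY : Δ.IsPrimitive Y := hΔY
  have hδ1 : Δ.IsPrimitive (δ 1) := hΔδ1
  rintro a (rfl | rfl | rfl)
  · exact AlgHom.isCoassocAt_of_eq_primitive_add_tmul hδ1 hY hΔX
  · exact hY.isCoassocAt
  · exact hδ1.isCoassocAt

/-- The coproduct `Δ` of `H₁`, the algebra homomorphism determined by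
`Δ(Y)=Y⊗1+1⊗Y`, `Δ(δ₁)=δ₁⊗1+1⊗δ₁`, `Δ(X)=X⊗1+1⊗X+δ₁⊗Y`, is coassociative on the
generators `X`, `Y`, `δ₁`. -/
theorem H1_coassoc_on_generators
    (H : Type*) [Ring H] [Algebra ℂ H]
    (X Y : H) (δ : ℕ+ → H)
    -- defining relations of `H₁`
    (hYX : Y * X - X * Y = X)
    (hXδ : ∀ n : ℕ+, X * δ n - δ n * X = δ (n + 1))
    (hYδ : ∀ n : ℕ+, Y * δ n - δ n * Y = (n : ℂ) • δ n)
    (hδδ : ∀ n m : ℕ+, δ n * δ m = δ m * δ n)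
    (Δ : H →ₐ[ℂ] H ⊗[ℂ] H)
    (hΔY : Δ Y = Y ⊗ₜ 1 + 1 ⊗ₜ Y)
    (hΔδ1 : Δ (δ 1) = δ 1 ⊗ₜ 1 + 1 ⊗ₜ δ 1)
    (hΔX : Δ X = X ⊗ₜ 1 + 1 ⊗ₜ X + δ 1 ⊗ₜ Y) :
    ∀ a ∈ ({X, Y, δ 1} : Set H),
      (Algebra.TensorProduct.assoc ℂ ℂ ℂ H H H)
          ((Algebra.TensorProduct.map Δ (AlgHom.id ℂ H)) (Δ a)) =
        (Algebra.TensorProduct.map (AlgHom.id ℂ H) Δ) (Δ a) :=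
  H1_coassoc_on_generators_general H X Y δ Δ hΔY hΔδ1 hΔX
end

section
/- The antipode relation S(X) = −X + δ_1 Y, S(Y) = −Y, S(δ_1) = −δ_1 (extended as an algebra anti-homomorphism) satisfies the antipode axiom m∘(S⊗id)∘Δ = η∘ε on the generators X, Y, δ_1 of H_1. -/
/-- The antipode `S(X) = −X + δ₁Y`, `S(Y) = −Y`, `S(δ₁) = −δ₁` of `H₁`, extended as an
algebra anti-homomorphism, satisfies the antipode axiom `m∘(S⊗id)∘Δ = η∘ε` on the
generators `X`, `Y`, `δ₁` (the coproduct being `Δ(Y)=Y⊗1+1⊗Y`, `Δ(δ₁)=δ₁⊗1+1⊗δ₁`,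
`Δ(X)=X⊗1+1⊗X+δ₁⊗Y`). -/
theorem H1_antipode_axiom_on_generators
    (H : Type*) [Ring H] [Algebra ℂ H]
    (X Y : H) (δ : ℕ+ → H)
    -- defining relations of `H₁`
    (hYX : Y * X - X * Y = X)
    (hXδ : ∀ n : ℕ+, X * δ n - δ n * X = δ (n + 1))
    (hYδ : ∀ n : ℕ+, Y * δ n - δ n * Y = (n : ℂ) • δ n)
    (hδδ : ∀ n m : ℕ+, δ n * δ m = δ m * δ n)
    -- the antipode: a linear algebra anti-homomorphism with the given values on generators
    (S : H →ₗ[ℂ] H)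
    (hSmul : ∀ a b : H, S (a * b) = S b * S a) (hS1 : S 1 = 1)
    (hSX : S X = -X + δ 1 * Y) (hSY : S Y = -Y) (hSδ1 : S (δ 1) = -δ 1)
    -- the counit, sending the generators to `0`
    (ε : H →ₐ[ℂ] ℂ)
    (hεX : ε X = 0) (hεY : ε Y = 0) (hεδ1 : ε (δ 1) = 0) :
    -- `m∘(S⊗id)∘Δ = η∘ε` evaluated on `X`, `Y`, `δ₁`, using the coproduct formulas
    S X * 1 + S 1 * X + S (δ 1) * Y = algebraMap ℂ H (ε X) ∧
    S Y * 1 + S 1 * Y = algebraMap ℂ H (ε Y) ∧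
    S (δ 1) * 1 + S 1 * δ 1 = algebraMap ℂ H (ε (δ 1)) := by
  rw [hSX, hSY, hSδ1, hS1, hεX, hεY, hεδ1]
  simp only [map_zero]
  refine ⟨?_, by noncomm_ring, by noncomm_ring⟩
  noncomm_ring
end
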